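/- arXiv:2301.08047 — 3 statements merged into one kernel-verified Lean document; each statement's English description precedes it below -/
import Mathlib

section
/- Let Ω ⊆ ℝ^d be a nonempty bounded set, let X ⊆ Ω be a nonempty finite set of points, and let A : ℝ^d → ℝ^d be a linear map for which there exist constants 0 < c ≤ C with c‖z‖₂ ≤ ‖A z‖₂ ≤ C‖z‖₂ for all z ∈ ℝ^d. Denote by h_{Ω,X} = sup_{x ∈ Ω} min_{x_k ∈ X} ‖x − x_k‖₂ the fill distance of X in Ω, and by h_{AΩ,AX} = sup_{x̃ ∈ AΩ} min_{x̃_k ∈ AX} ‖x̃ − x̃_k‖₂ the fill distance of the image set AX = {A x_k : x_k ∈ X} in the image domain AΩ = {A x : x ∈ Ω}. Then c · h_{Ω,X} ≤ h_{AΩ,AX} ≤ C · h_{Ω,X}. -/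
/-- The fill distance `h_{Ω,X} = sup_{x ∈ Ω} inf_{x_k ∈ X} ‖x − x_k‖₂`
of a point set `X` in a domain `Ω ⊆ ℝ^d`. -/
noncomputable def fillDist {d : ℕ} (Ω X : Set (EuclideanSpace ℝ (Fin d))) : ℝ :=
  ⨆ x : Ω, ⨅ xk : X, ‖(x : EuclideanSpace ℝ (Fin d)) - (xk : EuclideanSpace ℝ (Fin d))‖

/-- Let `Ω ⊆ ℝ^d` be nonempty and bounded, `X ⊆ Ω` a nonempty finite set of
points, and `A : ℝ^d → ℝ^d` linear with `c ‖z‖ ≤ ‖A z‖ ≤ C ‖z‖` for constants `0 < c ≤ C`.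
Then `c · h_{Ω,X} ≤ h_{AΩ,AX} ≤ C · h_{Ω,X}`. -/
theorem fillDist_image_bounds
    {d : ℕ} (Ω : Set (EuclideanSpace ℝ (Fin d))) (hΩne : Ω.Nonempty)
    (hΩbd : Bornology.IsBounded Ω)
    (X : Set (EuclideanSpace ℝ (Fin d))) (hXfin : X.Finite) (hXne : X.Nonempty)
    (hXΩ : X ⊆ Ω)
    (A : EuclideanSpace ℝ (Fin d) →ₗ[ℝ] EuclideanSpace ℝ (Fin d))
    (c C : ℝ) (hc : 0 < c) (hcC : c ≤ C)
    (hlow : ∀ z : EuclideanSpace ℝ (Fin d), c * ‖z‖ ≤ ‖A z‖)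
    (hup : ∀ z : EuclideanSpace ℝ (Fin d), ‖A z‖ ≤ C * ‖z‖) :
    c * fillDist Ω X ≤ fillDist (A '' Ω) (A '' X) ∧
    fillDist (A '' Ω) (A '' X) ≤ C * fillDist Ω X := by
  have hC : 0 ≤ C := le_trans hc.le hcC
  haveI : Nonempty X := hXne.to_subtype
  haveI : Nonempty Ω := hΩne.to_subtype
  haveI : Nonempty (A '' X : Set _) := (hXne.image A).to_subtype
  haveI : Nonempty (A '' Ω : Set _) := (hΩne.image A).to_subtype
  obtain ⟨x0, hx0⟩ := hXne
  obtain ⟨R, hR⟩ := Metric.isBounded_iff.mp hΩbd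
  -- inner families are bounded below by 0
  have hbb : ∀ x : EuclideanSpace ℝ (Fin d),
      BddBelow (Set.range fun xk : X => ‖x - (xk : EuclideanSpace ℝ (Fin d))‖) := by
    intro x
    exact ⟨0, by rintro _ ⟨xk, rfl⟩; exact norm_nonneg _⟩
  have hbbA : ∀ x : EuclideanSpace ℝ (Fin d),
      BddBelow (Set.range fun xk : (A '' X : Set _) => ‖x - (xk : EuclideanSpace ℝ (Fin d))‖) := by
    intro x
    exact ⟨0, by rintro _ ⟨xk, rfl⟩; exact norm_nonneg _⟩
  -- key pointwise inequalities
  have key_low : ∀ x : EuclideanSpace ℝ (Fin d),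
      c * (⨅ xk : X, ‖x - (xk : EuclideanSpace ℝ (Fin d))‖) ≤
        ⨅ yk : (A '' X : Set _), ‖A x - (yk : EuclideanSpace ℝ (Fin d))‖ := by
    intro x
    apply le_ciInf
    rintro ⟨y, xk, hxk, rfl⟩
    have h1 : (⨅ xk : X, ‖x - (xk : EuclideanSpace ℝ (Fin d))‖) ≤ ‖x - xk‖ :=
      ciInf_le (hbb x) ⟨xk, hxk⟩
    calc c * (⨅ xk : X, ‖x - (xk : EuclideanSpace ℝ (Fin d))‖)
        ≤ c * ‖x - xk‖ := by nlinarith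
      _ ≤ ‖A (x - xk)‖ := hlow _
      _ = ‖A x - A xk‖ := by rw [map_sub]
  have key_up : ∀ x : EuclideanSpace ℝ (Fin d),
      (⨅ yk : (A '' X : Set _), ‖A x - (yk : EuclideanSpace ℝ (Fin d))‖) ≤
        C * (⨅ xk : X, ‖x - (xk : EuclideanSpace ℝ (Fin d))‖) := by
    intro x
    -- the inf over the finite set X is attained
    obtain ⟨xk, hxkX, hmin⟩ := Set.exists_min_image X (fun z => ‖x - z‖) hXfin ⟨x0, hx0⟩
    have hinf_le : (⨅ xk' : X, ‖x - (xk' : EuclideanSpace ℝ (Fin d))‖) = ‖x - xk‖ := by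
      apply le_antisymm
      · exact ciInf_le (hbb x) ⟨xk, hxkX⟩
      · exact le_ciInf fun z => hmin z z.2
    calc (⨅ yk : (A '' X : Set _), ‖A x - (yk : EuclideanSpace ℝ (Fin d))‖)
        ≤ ‖A x - A xk‖ := ciInf_le (hbbA _) ⟨A xk, xk, hxkX, rfl⟩
      _ = ‖A (x - xk)‖ := by rw [map_sub]
      _ ≤ C * ‖x - xk‖ := hup _
      _ = C * (⨅ xk' : X, ‖x - (xk' : EuclideanSpace ℝ (Fin d))‖) := by rw [hinf_le]
  -- boundedness of the sup families
  have hbaX : BddAbove (Set.range fun x : Ω => ⨅ xk : X, ‖(x : EuclideanSpace ℝ (Fin d)) - (xk : EuclideanSpace ℝ (Fin d))‖) := by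
    refine ⟨R, ?_⟩
    rintro _ ⟨⟨x, hx⟩, rfl⟩
    calc (⨅ xk : X, ‖x - (xk : EuclideanSpace ℝ (Fin d))‖) ≤ ‖x - x0‖ :=
        ciInf_le (hbb x) ⟨x0, hx0⟩
      _ = dist x x0 := (dist_eq_norm _ _).symm
      _ ≤ R := hR hx (hXΩ hx0)
  have hbaAX : BddAbove (Set.range fun y : (A '' Ω : Set _) =>
      ⨅ yk : (A '' X : Set _), ‖(y : EuclideanSpace ℝ (Fin d)) - (yk : EuclideanSpace ℝ (Fin d))‖) := by
    refine ⟨C * R, ?_⟩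
    rintro _ ⟨⟨y, x, hx, rfl⟩, rfl⟩
    have hR' : ‖x - x0‖ ≤ R := by
      rw [← dist_eq_norm]; exact hR hx (hXΩ hx0)
    calc (⨅ yk : (A '' X : Set _), ‖A x - (yk : EuclideanSpace ℝ (Fin d))‖)
        ≤ ‖A x - A x0‖ := ciInf_le (hbbA _) ⟨A x0, x0, hx0, rfl⟩
      _ = ‖A (x - x0)‖ := by rw [map_sub]
      _ ≤ C * ‖x - x0‖ := hup _
      _ ≤ C * R := by nlinarith
  constructor
  · -- lower bound
    rw [mul_comm, ← le_div_iff₀ hc]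
    apply ciSup_le
    rintro ⟨x, hx⟩
    rw [le_div_iff₀ hc, mul_comm]
    calc c * (⨅ xk : X, ‖x - (xk : EuclideanSpace ℝ (Fin d))‖)
        ≤ ⨅ yk : (A '' X : Set _), ‖A x - (yk : EuclideanSpace ℝ (Fin d))‖ := key_low x
      _ ≤ fillDist (A '' Ω) (A '' X) := le_ciSup hbaAX ⟨A x, x, hx, rfl⟩
  · -- upper bound
    apply ciSup_le
    rintro ⟨y, x, hx, rfl⟩
    calc (⨅ yk : (A '' X : Set _), ‖A x - (yk : EuclideanSpace ℝ (Fin d))‖)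
        ≤ C * (⨅ xk : X, ‖x - (xk : EuclideanSpace ℝ (Fin d))‖) := key_up x
      _ ≤ C * fillDist Ω X :=
          mul_le_mul_of_nonneg_left (le_ciSup hbaX ⟨x, hx⟩) hC
end

section
/- Let K be a symmetric positive definite n×n real matrix, let f ∈ ℝⁿ, and let c = K⁻¹ f. Let V ⊊ {1, ..., n} be a nonempty set of validation indices and let T = {1, ..., n} \ V be the (nonempty) complementary training indices. The principal submatrix K_{T,T} is positive definite, hence invertible; let β = (K_{T,T})⁻¹ f_T be the coefficients of the kernel interpolant trained on T, and define the residual vector e ∈ ℝ^V by e_i = f_i − Σ_{j ∈ T} K_{i,j} β_j for i ∈ V. Then e is the unique solution of the linear system (K⁻¹)_{V,V} e = c_V, where (K⁻¹)_{V,V} is the principal submatrix of K⁻¹ with rows and columns restricted to V and c_V is the restriction of c to the indices in V. -/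
/-!
Extend `β` by zero to `b : Fin n → ℝ`. The residual `u = f - K b` vanishes on the training
set `T`, because `β` solves the training system, and equals `e` on `V`. Hence
`K⁻¹ u = c - b`, and reading this on `V`, where `b` vanishes and `u` is supported, gives
`(K⁻¹)_{V,V} e = c_V`. Principal submatrices of the positive definite matrices `K` and `K⁻¹`
are positive definite, which gives the rest.
-/

open Matrix

theorem Matrix.mulVec_eq_submatrix_mulVec_of_eq_zero {m n R : Type*} [Fintype n]
    [NonUnitalNonAssocSemiring R] (A : Matrix m n R) {S : Finset n} {u : n → R}
    (hu : ∀ j ∉ S, u j = 0) :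
    A *ᵥ u = A.submatrix id (Subtype.val : S → n) *ᵥ fun j => u j := by
  funext i
  simp only [mulVec, dotProduct, submatrix_apply, id,
    Finset.sum_coe_sort S (fun j => A i j * u j)]
  exact (Finset.sum_subset S.subset_univ fun j _ hj => by rw [hu j hj, mul_zero]).symm

theorem Matrix.submatrix_inv_mulVec_residual {ι R : Type*} [Fintype ι] [DecidableEq ι]
    [CommRing R] {K : Matrix ι ι R} (hK : IsUnit K) (f : ι → R) (V : Finset ι)
    (β : {j // j ∈ Vᶜ} → R)
    (hβ : K.submatrix Subtype.val Subtype.val *ᵥ β = fun j : {j // j ∈ Vᶜ} => f j) :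
    K⁻¹.submatrix (Subtype.val : {i // i ∈ V} → ι) Subtype.val *ᵥ
        (fun i : {i // i ∈ V} => f i - ∑ j : {j // j ∈ Vᶜ}, K i j * β j) =
      fun i : {i // i ∈ V} => (K⁻¹ *ᵥ f) i := by
  set b : ι → R := fun k => if h : k ∈ Vᶜ then β ⟨k, h⟩ else 0
  have hb : ∀ k ∉ Vᶜ, b k = 0 := fun k hk => dif_neg hk
  have hKb : ∀ i, (K *ᵥ b) i = ∑ j : {j // j ∈ Vᶜ}, K i j * β j := by
    intro i
    have hbβ : (fun j : {j // j ∈ Vᶜ} => b j) = β := funext fun j => dif_pos j.2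
    rw [K.mulVec_eq_submatrix_mulVec_of_eq_zero hb, hbβ]
    rfl
  have hres : ∀ j ∉ V, (f - K *ᵥ b) j = 0 := by
    intro j hj
    have hβj := congrFun hβ ⟨j, Finset.mem_compl.mpr hj⟩
    simp only [mulVec, dotProduct, submatrix_apply] at hβj
    rw [Pi.sub_apply, hKb, hβj, sub_self]
  have hKinv : K⁻¹ *ᵥ (f - K *ᵥ b) = K⁻¹ *ᵥ f - b := by
    rw [mulVec_sub, mulVec_mulVec, nonsing_inv_mul K ((isUnit_iff_isUnit_det K).mp hK),
      one_mulVec]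
  funext i
  have hbi : b i = 0 := hb i (by simp)
  have hKinv_i := congrFun (K⁻¹.mulVec_eq_submatrix_mulVec_of_eq_zero hres) i
  simp only [hKinv, Pi.sub_apply, hbi, sub_zero, hKb] at hKinv_i
  exact hKinv_i.symm

theorem extended_rippa_general
    (n : ℕ) (K : Matrix (Fin n) (Fin n) ℝ) (hK : K.PosDef)
    (f : Fin n → ℝ) (c : Fin n → ℝ) (hc : c = K⁻¹.mulVec f)
    (V : Finset (Fin n))
    (T : Finset (Fin n)) (hT : T = Vᶜ)
    (KTT : Matrix {i // i ∈ T} {i // i ∈ T} ℝ)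
    (hKTT : KTT = K.submatrix (Subtype.val : {i // i ∈ T} → Fin n) Subtype.val)
    (β : {i // i ∈ T} → ℝ) (hβ : β = KTT⁻¹.mulVec (fun j : {i // i ∈ T} => f j))
    (e : {i // i ∈ V} → ℝ)
    (he : ∀ i : {i // i ∈ V}, e i = f i - ∑ j : {i // i ∈ T}, K i j * β j)
    (M : Matrix {i // i ∈ V} {i // i ∈ V} ℝ)
    (hM : M = (K⁻¹).submatrix (Subtype.val : {i // i ∈ V} → Fin n) Subtype.val) :
    KTT.PosDef ∧
    M.mulVec e = (fun i : {i // i ∈ V} => c i) ∧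
    (∀ e' : {i // i ∈ V} → ℝ,
      M.mulVec e' = (fun i : {i // i ∈ V} => c i) → e' = e) := by
  subst hT hKTT hM hc
  have hKTT_pos : (K.submatrix (Subtype.val : {i // i ∈ Vᶜ} → Fin n) Subtype.val).PosDef :=
    hK.submatrix Subtype.val_injective
  have hM_unit : IsUnit ((K⁻¹).submatrix (Subtype.val : {i // i ∈ V} → Fin n) Subtype.val) :=
    (hK.inv.submatrix Subtype.val_injective).isUnit
  have hβ_solves :
      K.submatrix Subtype.val Subtype.val *ᵥ β = fun j : {j // j ∈ Vᶜ} => f j := by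
    rw [hβ, mulVec_mulVec, mul_nonsing_inv _ ((isUnit_iff_isUnit_det _).mp hKTT_pos.isUnit),
      one_mulVec]
  have he_solves :
      (K⁻¹).submatrix Subtype.val Subtype.val *ᵥ e =
        fun i : {i // i ∈ V} => (K⁻¹ *ᵥ f) i := by
    rw [funext he]
    exact submatrix_inv_mulVec_residual hK.isUnit f V β hβ_solves
  exact ⟨hKTT_pos, he_solves, fun e' he' =>
    mulVec_injective_iff_isUnit.mpr hM_unit (he'.trans he_solves.symm)⟩

/-- **Extended Rippa's Algorithm.** Let `K` be a symmetric positive definite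
`n × n` real matrix, `f ∈ ℝⁿ` and `c = K⁻¹ f`. Let `V ⊊ {1, …, n}` be a nonempty set of
validation indices with complementary training indices `T = Vᶜ`. The principal submatrix
`K_{T,T}` is positive definite; with `β = (K_{T,T})⁻¹ f_T` and validation residuals
`e i = f i − ∑_{j ∈ T} K i j * β j` (for `i ∈ V`), the vector `e` is the unique solution
of the linear system `(K⁻¹)_{V,V} e = c_V`. -/
theorem extended_rippa
    (n : ℕ) (K : Matrix (Fin n) (Fin n) ℝ) (hK : K.PosDef)
    (f : Fin n → ℝ) (c : Fin n → ℝ) (hc : c = K⁻¹.mulVec f)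
    (V : Finset (Fin n)) (hVne : V.Nonempty) (hVproper : V ≠ Finset.univ)
    (T : Finset (Fin n)) (hT : T = Vᶜ)
    (KTT : Matrix {i // i ∈ T} {i // i ∈ T} ℝ)
    (hKTT : KTT = K.submatrix (Subtype.val : {i // i ∈ T} → Fin n) Subtype.val)
    (β : {i // i ∈ T} → ℝ) (hβ : β = KTT⁻¹.mulVec (fun j : {i // i ∈ T} => f j))
    (e : {i // i ∈ V} → ℝ)
    (he : ∀ i : {i // i ∈ V}, e i = f i - ∑ j : {i // i ∈ T}, K i j * β j)
    (M : Matrix {i // i ∈ V} {i // i ∈ V} ℝ)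
    (hM : M = (K⁻¹).submatrix (Subtype.val : {i // i ∈ V} → Fin n) Subtype.val) :
    KTT.PosDef ∧
    M.mulVec e = (fun i : {i // i ∈ V} => c i) ∧
    (∀ e' : {i // i ∈ V} → ℝ,
      M.mulVec e' = (fun i : {i // i ∈ V} => c i) → e' = e) :=
  extended_rippa_general n K hK f c hc V T hT KTT hKTT β hβ e he M hM
end

section
/- Let K be a symmetric positive definite n×n real matrix with n ≥ 2, let f ∈ ℝⁿ, and let c = K⁻¹ f. Fix an index k ∈ {1, ..., n}, let T = {1, ..., n} \ {k}, and let β = (K_{T,T})⁻¹ f_T be the coefficients of the interpolant trained on all indices except k. Then the leave-one-out residual at index k satisfies f_k − Σ_{j ∈ T} K_{k,j} β_j = c_k / (K⁻¹)_{k,k}, where (K⁻¹)_{k,k} > 0 is the k-th diagonal entry of K⁻¹. -/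
/-!
Let `r = c k / (K⁻¹) k k` and `u = K⁻¹ (f - r eₖ)`. The choice of `r` makes `u k = 0`, so the
restriction of `u` to `T` solves `K_{T,T} u_T = f_T` (the equation at `k` is the only one perturbed
by `r eₖ`), hence `β = u_T`. The leave-one-out residual is then `f k - (K u) k = r`.
-/

namespace Matrix

variable {ι : Type*} [Fintype ι] [DecidableEq ι]

theorem sum_subtype_ne_mul_eq_dotProduct {R : Type*} [NonUnitalNonAssocSemiring R] {k : ι}
    (v : ι → R) {u : ι → R} (hu : u k = 0) : ∑ j : {j // j ≠ k}, v j * u j = v ⬝ᵥ u := by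
  rw [dotProduct, Fintype.sum_eq_add_sum_subtype_ne _ k, hu, mul_zero, zero_add]

theorem sub_sum_mul_inv_submatrix_mulVec_eq_div {𝕜 : Type*} [Field 𝕜] {K : Matrix ι ι 𝕜}
    (hK : IsUnit K) {k : ι}
    (hKT : IsUnit (K.submatrix (Subtype.val : {j // j ≠ k} → ι) (Subtype.val : {j // j ≠ k} → ι)))
    (hd : K⁻¹ k k ≠ 0) (f : ι → 𝕜) :
    f k - ∑ j : {j // j ≠ k}, K k j *
        ((K.submatrix Subtype.val Subtype.val)⁻¹ *ᵥ fun j : {j // j ≠ k} => f j) j =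
      (K⁻¹ *ᵥ f) k / K⁻¹ k k := by
  set r := (K⁻¹ *ᵥ f) k / K⁻¹ k k
  set u := K⁻¹ *ᵥ (f - r • Pi.single k 1) with hu
  have hKu : K *ᵥ u = f - r • Pi.single k 1 := by
    rw [hu, mulVec_mulVec, mul_nonsing_inv _ ((isUnit_iff_isUnit_det K).mp hK), one_mulVec]
  have huk : u k = 0 := by
    simp [hu, mulVec_sub, mulVec_smul, r, div_mul_cancel₀ _ hd]
  have hβ : (K.submatrix Subtype.val Subtype.val)⁻¹ *ᵥ (fun j : {j // j ≠ k} => f j) =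
      fun j : {j // j ≠ k} => u j := by
    have hKTu : K.submatrix Subtype.val Subtype.val *ᵥ (fun j : {j // j ≠ k} => u j) =
        fun j : {j // j ≠ k} => f j := by
      funext i
      change ∑ j : {j // j ≠ k}, K i j * u j = f i
      rw [sum_subtype_ne_mul_eq_dotProduct _ huk]
      change (K *ᵥ u) i = f i
      simp [hKu, i.2]
    rw [← hKTu, mulVec_mulVec, nonsing_inv_mul _ ((isUnit_iff_isUnit_det _).mp hKT), one_mulVec]
  rw [hβ, sum_subtype_ne_mul_eq_dotProduct _ huk]
  change f k - (K *ᵥ u) k = r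
  simp [hKu]

end Matrix

theorem rippa_loocv_general
    (n : ℕ) (K : Matrix (Fin n) (Fin n) ℝ) (hK : K.PosDef)
    (f : Fin n → ℝ) (c : Fin n → ℝ) (hc : c = K⁻¹.mulVec f)
    (k : Fin n)
    (KTT : Matrix {j : Fin n // j ≠ k} {j : Fin n // j ≠ k} ℝ)
    (hKTT : KTT = K.submatrix (Subtype.val : {j : Fin n // j ≠ k} → Fin n) Subtype.val)
    (β : {j : Fin n // j ≠ k} → ℝ)
    (hβ : β = KTT⁻¹.mulVec (fun j : {j : Fin n // j ≠ k} => f j)) :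
    0 < K⁻¹ k k ∧
    f k - ∑ j : {j : Fin n // j ≠ k}, K k j * β j = c k / K⁻¹ k k := by
  subst hc hβ hKTT
  have hd : 0 < K⁻¹ k k := hK.inv.diag_pos
  exact ⟨hd, Matrix.sub_sum_mul_inv_submatrix_mulVec_eq_div hK.isUnit
    (hK.submatrix Subtype.val_injective).isUnit hd.ne' f⟩

/-- **Rippa's LOOCV formula.** Let `K` be a symmetric positive definite
`n × n` real matrix with `n ≥ 2`, `f ∈ ℝⁿ`, `c = K⁻¹ f`. For an index `k`, let
`T = {1,…,n} \ {k}` and `β = (K_{T,T})⁻¹ f_T`. Then the leave-one-out residual at `k`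
satisfies `f k − ∑_{j ∈ T} K k j * β j = c k / (K⁻¹)_{k,k}`, where `(K⁻¹)_{k,k} > 0`. -/
theorem rippa_loocv
    (n : ℕ) (hn : 2 ≤ n) (K : Matrix (Fin n) (Fin n) ℝ) (hK : K.PosDef)
    (f : Fin n → ℝ) (c : Fin n → ℝ) (hc : c = K⁻¹.mulVec f)
    (k : Fin n)
    (KTT : Matrix {j : Fin n // j ≠ k} {j : Fin n // j ≠ k} ℝ)
    (hKTT : KTT = K.submatrix (Subtype.val : {j : Fin n // j ≠ k} → Fin n) Subtype.val)
    (β : {j : Fin n // j ≠ k} → ℝ)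
    (hβ : β = KTT⁻¹.mulVec (fun j : {j : Fin n // j ≠ k} => f j)) :
    0 < K⁻¹ k k ∧
    f k - ∑ j : {j : Fin n // j ≠ k}, K k j * β j = c k / K⁻¹ k k :=
  rippa_loocv_general n K hK f c hc k KTT hKTT β hβ
end
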